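/- Let α be a peak composition of n, let S ∈ SMPCT(α), and let β be a composition of n that refines comp_n(Des(S)). Then there exists a unique T ∈ MPCT(α) with wt(T) = β such that Std(T) = S. -/

import Mathlib

open scoped Classical

noncomputable section

namespace QSQ

/-- A box `(c, r)`: column `c`, row `r` (both 1-indexed, rows counted from the bottom). -/
abbrev Box : Type := ℕ × ℕ

/-- An entry of the marked alphabet: `(i, true)` represents `i′`, `(i, false)` represents `i`. -/
abbrev MEntry : Type := ℕ × Bool

/-- Code realising the marked-alphabet order `1′ < 1 < 2′ < 2 < ⋯`. -/
def mcode (x : MEntry) : ℕ := 2 * x.1 - (if x.2 then 1 else 0)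

/-- `α` is a composition of `n`: a list of positive integers summing to `n`. -/
def IsComposition (n : ℕ) (α : List ℕ) : Prop := (∀ a ∈ α, 0 < a) ∧ α.sum = n

/-- All parts are positive, and every part except possibly the last is `> 1`. -/
def PeakShape (α : List ℕ) : Prop :=
  (∀ a ∈ α, 0 < a) ∧ ∀ i, i + 1 < α.length → 1 < α.getD i 0

/-- `α` is a peak composition of `n`. -/
def IsPeakComposition (n : ℕ) (α : List ℕ) : Prop := IsComposition n α ∧ PeakShape α

/-- Box `(c, r)` belongs to the diagram `D_α`. -/
def inDiagram (α : List ℕ) (b : Box) : Prop :=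
  1 ≤ b.1 ∧ 1 ≤ b.2 ∧ b.2 ≤ α.length ∧ b.1 ≤ α.getD (b.2 - 1) 0

instance (α : List ℕ) (b : Box) : Decidable (inDiagram α b) := by
  unfold inDiagram; infer_instance

/-- The diagram `D_α` as a finite set of boxes. -/
def diagramFinset (α : List ℕ) : Finset Box :=
  ((Finset.Icc 1 (α.foldr max 0)) ×ˢ (Finset.Icc 1 α.length)).filter (fun b => inDiagram α b)

/-- `B` is the set of boxes of the diagram of some peak composition. -/
def IsPeakDiagram (B : Set Box) : Prop :=
  ∃ γ : List ℕ, PeakShape γ ∧ B = {b | inDiagram γ b}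

/-- `β` refines `α`: `α` is obtained by summing consecutive entries of `β`. -/
def Refines (β α : List ℕ) : Prop :=
  ∃ L : List (List ℕ), (∀ l ∈ L, l ≠ []) ∧ L.flatten = β ∧ L.map List.sum = α

/-- `set(γ) = {γ₁, γ₁+γ₂, …, γ₁+⋯+γ_{k-1}}`, the proper partial sums. -/
def setOfComp (γ : List ℕ) : Finset ℕ :=
  ((List.range (γ.length - 1)).map (fun i => (γ.take (i + 1)).sum)).toFinset

/-- `comp_n(X)`: the composition of `n` whose set of proper partial sums is `X ⊆ [n-1]`. -/
def compOf (n : ℕ) (X : Finset ℕ) : List ℕ :=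
  let l := (0 :: X.sort (· ≤ ·)) ++ [n]
  (List.range (l.length - 1)).map (fun i => l.getD (i + 1) 0 - l.getD i 0)

/-- `Peak(X) = {i ∈ X : i − 1 ∉ X and i ≠ 1}`. -/
def peakSet (X : Finset ℕ) : Finset ℕ := X.filter (fun i => (i - 1) ∉ X ∧ i ≠ 1)

/-! ### Marked peak composition tableaux -/

/-- `T` is a marked peak composition tableau of shape `α` (a peak composition of `n`).
Fillings take the default value `(0, false)` outside the diagram. -/
structure IsMPCT (n : ℕ) (α : List ℕ) (T : Box → MEntry) : Prop where
  offDiag : ∀ b, ¬ inDiagram α b → T b = (0, false)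
  pos : ∀ b, inDiagram α b → 1 ≤ (T b).1
  /-- (MPCT1) rows weakly increase, with no repeated marked entry in a row. -/
  row_weak : ∀ c c' r, c < c' → inDiagram α (c, r) → inDiagram α (c', r) →
      mcode (T (c, r)) ≤ mcode (T (c', r)) ∧ ((T (c, r)).2 = true → T (c, r) ≠ T (c', r))
  /-- (MPCT2) the first column strictly increases bottom to top. -/
  col_strict : ∀ r r', r < r' → inDiagram α (1, r) → inDiagram α (1, r') →
      mcode (T (1, r)) < mcode (T (1, r'))
  /-- (MPCT3) the boxes with entries among `{1', 1, …, k', k}` form a peak-composition diagram. -/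
  peak_filter : ∀ k ≤ n, IsPeakDiagram {b | inDiagram α b ∧ (T b).1 ≤ k}
  /-- (MPCT4) an unmarked `i` in box `(2,r)` forbids `i` and `i'` in box `(1,r+1)`. -/
  mpct4 : ∀ r, inDiagram α (2, r) → inDiagram α (1, r + 1) → (T (2, r)).2 = false →
      (T (1, r + 1)).1 ≠ (T (2, r)).1

/-- The number of occurrences of `i` or `i'` in `T`. -/
def wtFun (α : List ℕ) (T : Box → MEntry) (i : ℕ) : ℕ :=
  ((diagramFinset α).filter (fun b => (T b).1 = i)).card

/-- The weight of `T` as a list `(wt(T)₁, …, wt(T)_m)`, `m` the largest value occurring. -/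
def wtList (α : List ℕ) (T : Box → MEntry) : List ℕ :=
  (List.range ((diagramFinset α).sup (fun b => (T b).1))).map (fun i => wtFun α T (i + 1))

/-- `T ∈ MPCT(α)`: an MPCT whose weight has no zero entry to the left of a nonzero entry. -/
def InMPCT (n : ℕ) (α : List ℕ) (T : Box → MEntry) : Prop :=
  IsMPCT n α T ∧ ∀ i j, 1 ≤ i → i < j → wtFun α T i = 0 → wtFun α T j = 0

/-- `T ∈ SMPCT(α)`: each number `1, …, n` appears exactly once (marked or unmarked). -/
def InSMPCT (n : ℕ) (α : List ℕ) (T : Box → MEntry) : Prop :=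
  InMPCT n α T ∧ ∀ i, 1 ≤ i → i ≤ n → wtFun α T i = 1

/-! ### Standardisation -/

/-- Secondary key for the standardisation order: marked entries of a given value are taken
bottom to top; unmarked ones from the highest row downwards. -/
def stdk2 (α : List ℕ) (T : Box → MEntry) (b : Box) : ℕ :=
  if (T b).2 then b.2 else α.length + 1 - b.2

/-- The strict total order on boxes in which standardisation assigns `1, 2, …, n`. -/
def keyLt (α : List ℕ) (T : Box → MEntry) (a b : Box) : Prop :=
  mcode (T a) < mcode (T b) ∨
    (mcode (T a) = mcode (T b) ∧ (stdk2 α T a < stdk2 α T b ∨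
      (stdk2 α T a = stdk2 α T b ∧ a.1 < b.1)))

/-- The standardisation map: box `b` receives the rank of `b` in the standardisation order,
keeping its mark. -/
def stdize (α : List ℕ) (T : Box → MEntry) : Box → MEntry := fun b =>
  if inDiagram α b then
    (((diagramFinset α).filter (fun a => keyLt α T a b)).card + 1, (T b).2)
  else (0, false)

/-- The descent set of `S ∈ SMPCT(α)`: `i` is a descent if `i` is unmarked and strictly below
`i+1`, or `i+1` is marked and weakly below `i`. -/
def DesM (n : ℕ) (α : List ℕ) (S : Box → MEntry) : Finset ℕ :=
  (Finset.Icc 1 (n - 1)).filter (fun i =>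
    ∃ b ∈ diagramFinset α, ∃ b' ∈ diagramFinset α, (S b).1 = i ∧ (S b').1 = i + 1 ∧
      (((S b).2 = false ∧ b.2 < b'.2) ∨ ((S b').2 = true ∧ b'.2 ≤ b.2)))

/-- Remove all marks. -/
def unmark (S : Box → MEntry) : Box → ℕ := fun b => (S b).1

/-! ### Standard (unmarked) tableaux -/

/-- `T` is a standard immaculate tableau of shape `α ⊨ n`: a bijective filling by `1, …, n`
with rows increasing left to right and the first column increasing bottom to top. -/
structure IsSIT (n : ℕ) (α : List ℕ) (T : Box → ℕ) : Prop where
  offDiag : ∀ b, ¬ inDiagram α b → T b = 0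
  range : ∀ b, inDiagram α b → 1 ≤ T b ∧ T b ≤ n
  inj : ∀ b b', inDiagram α b → inDiagram α b' → T b = T b' → b = b'
  surj : ∀ i, 1 ≤ i → i ≤ n → ∃ b, inDiagram α b ∧ T b = i
  row_strict : ∀ c c' r, c < c' → inDiagram α (c, r) → inDiagram α (c', r) →
      T (c, r) < T (c', r)
  col_strict : ∀ r r', r < r' → inDiagram α (1, r) → inDiagram α (1, r') →
      T (1, r) < T (1, r')

/-- (SPCT3)/(SPYCT3): for every `k ≤ n` the boxes with entries `≤ k` form the diagram of a
peak composition. -/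
def SPCT3 (n : ℕ) (α : List ℕ) (T : Box → ℕ) : Prop :=
  ∀ k ≤ n, IsPeakDiagram {b | inDiagram α b ∧ T b ≤ k}

/-- Standard peak composition tableau. -/
def IsSPCT (n : ℕ) (α : List ℕ) (T : Box → ℕ) : Prop := IsSIT n α T ∧ SPCT3 n α T

/-- (SPYCT4): if `T(c,r) < T(c+1,r')` for some `r' < r` then box `(c+1,r)` exists and
`T(c+1,r) < T(c+1,r')`. -/
def SPYCT4 (α : List ℕ) (T : Box → ℕ) : Prop :=
  ∀ c r r', r' < r → inDiagram α (c, r) → inDiagram α (c + 1, r') →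
    T (c, r) < T (c + 1, r') → inDiagram α (c + 1, r) ∧ T (c + 1, r) < T (c + 1, r')

/-- Standard Young composition tableau. -/
def IsSYCT (n : ℕ) (α : List ℕ) (T : Box → ℕ) : Prop := IsSIT n α T ∧ SPYCT4 α T

/-- Standard peak Young composition tableau (of peak shape `α ⊨ n`). -/
def IsSPYCT (n : ℕ) (α : List ℕ) (T : Box → ℕ) : Prop :=
  IsPeakComposition n α ∧ IsSIT n α T ∧ SPCT3 n α T ∧ SPYCT4 α T

/-- `Des↑(T) = {i : i+1 is strictly above i}`. -/
def DesUp (n : ℕ) (α : List ℕ) (T : Box → ℕ) : Finset ℕ :=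
  (Finset.Icc 1 (n - 1)).filter (fun i =>
    ∃ b ∈ diagramFinset α, ∃ b' ∈ diagramFinset α, T b = i ∧ T b' = i + 1 ∧ b.2 < b'.2)

def PeakUp (n : ℕ) (α : List ℕ) (T : Box → ℕ) : Finset ℕ := peakSet (DesUp n α T)

/-- `Des←(T) = {i : i+1 is weakly left of i}`. -/
def DesLeft (n : ℕ) (α : List ℕ) (T : Box → ℕ) : Finset ℕ :=
  (Finset.Icc 1 (n - 1)).filter (fun i =>
    ∃ b ∈ diagramFinset α, ∃ b' ∈ diagramFinset α, T b = i ∧ T b' = i + 1 ∧ b'.1 ≤ b.1)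

def PeakLeft (n : ℕ) (α : List ℕ) (T : Box → ℕ) : Finset ℕ := peakSet (DesLeft n α T)

/-! ### Dual immaculate recording tableaux -/

/-- `i+1` lies strictly right of `i` in `Q` (so `i+1` continues the row strip of `i`). -/
def ContR (β : List ℕ) (Q : Box → ℕ) (i : ℕ) : Prop :=
  ∃ b ∈ diagramFinset β, ∃ b' ∈ diagramFinset β, Q b = i ∧ Q b' = i + 1 ∧ b.1 < b'.1

/-- `Q` is a dual immaculate recording tableau of shape `β ⊨ n`. -/
structure IsDIRT (n : ℕ) (β : List ℕ) (Q : Box → ℕ) : Prop where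
  offDiag : ∀ b, ¬ inDiagram β b → Q b = 0
  range : ∀ b, inDiagram β b → 1 ≤ Q b ∧ Q b ≤ n
  inj : ∀ b b', inDiagram β b → inDiagram β b' → Q b = Q b' → b = b'
  surj : ∀ i, 1 ≤ i → i ≤ n → ∃ b, inDiagram β b ∧ Q b = i
  /-- (DIRT1) -/
  row_strict : ∀ c c' r, c < c' → inDiagram β (c, r) → inDiagram β (c', r) →
      Q (c, r) < Q (c', r)
  /-- (DIRT3) first-column entries increase from top to bottom. -/
  col_top_down : ∀ r r', r < r' → inDiagram β (1, r) → inDiagram β (1, r') →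
      Q (1, r') < Q (1, r)
  /-- (DIRT2) row strips start in the first column. -/
  strips_start : ∀ i b, 1 ≤ i → i ≤ n → inDiagram β b → Q b = i →
      (i = 1 ∨ ¬ ContR β Q (i - 1)) → b.1 = 1
  /-- (DIRT4) -/
  dirt4 : ∀ c r r', r' < r → inDiagram β (c, r) → inDiagram β (c, r') →
      Q (c, r') < Q (c, r) → inDiagram β (c + 1, r') ∧ Q (c + 1, r') < Q (c, r)

/-- `Q` has row strip shape `γ`: the breaks between row strips occur exactly at the proper
partial sums of `γ`. -/
def HasRowStripShape (n : ℕ) (β : List ℕ) (Q : Box → ℕ) (γ : List ℕ) : Prop :=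
  IsComposition n γ ∧ ∀ i, 1 ≤ i → i + 1 ≤ n → (ContR β Q i ↔ i ∉ setOfComp γ)

/-! ### Quasisymmetric functions -/

/-- The monomial quasisymmetric function `M_α` in variables indexed by `ℕ`. -/
def Mqs (α : List ℕ) : MvPowerSeries ℕ ℚ := fun d =>
  if ∃ f : Fin α.length → ℕ, StrictMono f ∧
      d = ∑ j : Fin α.length, Finsupp.single (f j) (α.get j) then 1 else 0

/-- The fundamental quasisymmetric function `F_α = Σ_{β refines α} M_β`. -/
def Fqs (α : List ℕ) : MvPowerSeries ℕ ℚ :=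
  ∑ᶠ β ∈ {β : List ℕ | Refines β α}, Mqs β

/-- The peak function `K_α` for a peak composition `α ⊨ n`. -/
def Kfn (n : ℕ) (α : List ℕ) : MvPowerSeries ℕ ℚ :=
  (MvPowerSeries.C : ℚ →+* MvPowerSeries ℕ ℚ) ((2 : ℚ) ^ ((peakSet (setOfComp α)).card + 1)) *
    ∑ᶠ β ∈ {β : List ℕ | IsComposition n β ∧
      peakSet (setOfComp α) ⊆ symmDiff (setOfComp β) ((setOfComp β).image (· + 1))}, Fqs β

/-- The quasisymmetric Schur Q-function `Q̃_α = Σ_{T ∈ MPCT(α)} M_{wt(T)}`. -/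
def Qtilde (n : ℕ) (α : List ℕ) : MvPowerSeries ℕ ℚ :=
  ∑ᶠ T ∈ {T : Box → MEntry | InMPCT n α T}, Mqs (wtList α T)

/-- The peak Young quasisymmetric Schur function
`S̃_α = Σ_{T ∈ SPYCT(α)} K_{comp_n(Peak←(T))}`. -/
def Stilde (n : ℕ) (α : List ℕ) : MvPowerSeries ℕ ℚ :=
  ∑ᶠ T ∈ {T : Box → ℕ | IsSPYCT n α T}, Kfn n (compOf n (PeakLeft n α T))

/-! ### The insertion algorithm of Allen–Hallam–Mason -/

/-- A tableau given concretely as its list of rows, from bottom to top. -/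
def shapeOf (rows : List (List ℕ)) : List ℕ := rows.map List.length

/-- The filling `Box → ℕ` determined by a list of rows (bottom to top). -/
def toFilling (rows : List (List ℕ)) : Box → ℕ := fun b =>
  if 1 ≤ b.1 ∧ 1 ≤ b.2 then (rows.getD (b.2 - 1) []).getD (b.1 - 1) 0 else 0

/-- The augmented-diagram scan order: columns right to left, each column top to bottom.
(Positions not present in a given row are simply skipped by the insertion step.) -/
def scanList (rows : List (List ℕ)) : List (ℕ × ℕ) :=
  let C := (rows.map List.length).foldr max 0 + 1
  ((List.range C).reverse.map (fun ci =>
    (List.range rows.length).reverse.map (fun ri => (ci + 1, ri + 1)))).flatten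

/-- One insertion of `k` (Procedure 3.1 of Allen–Hallam–Mason): walk the scan list looking for
the first box `(c,r)` with `T̄(c-1,r) ≤ k < T̄(c,r)`; place at an augmented box, bump at an
interior box and continue with the bumped entry, or create a new row (in the highest position
in the first column with all first-column entries below smaller than `k`) if the scan ends.
Returns the new rows and the position of the newly created box. -/
def insertScan : List (ℕ × ℕ) → ℕ → List (List ℕ) → List (List ℕ) × ℕ × ℕ
  | [], k, rows =>
      let j := (rows.takeWhile (fun row => row.headD 0 < k)).length
      (rows.take j ++ [[k]] ++ rows.drop j, (1, j + 1))
  | (c, r) :: rest, k, rows =>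
      let row := rows.getD (r - 1) []
      if 2 ≤ c ∧ c ≤ row.length + 1 ∧ row.getD (c - 2) 0 ≤ k then
        if c = row.length + 1 then
          (rows.set (r - 1) (row ++ [k]), (c, r))
        else if k < row.getD (c - 1) 0 then
          insertScan rest (row.getD (c - 1) 0) (rows.set (r - 1) (row.set (c - 1) k))
        else insertScan rest k rows
      else insertScan rest k rows

/-- The reading word of a filling of shape `α`: rows read top to bottom, left to right. -/
def readingWord (α : List ℕ) (T : Box → ℕ) : List ℕ :=
  ((List.range α.length).reverse.map (fun ri =>
    (List.range (α.getD ri 0)).map (fun ci => T (ci + 1, ri + 1)))).flatten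

/-- Reading insertion: insert the letters of `w` successively into the (initially empty)
insertion tableau `P`, recording in `Q` the label of each newly created box. -/
def readingInsertPQ (w : List ℕ) : List (List ℕ) × List (List ℕ) :=
  w.foldl (fun PQ k =>
    let res := insertScan (scanList PQ.1) k PQ.1
    let c := res.2.1
    let r := res.2.2
    let j := (PQ.2.map List.length).sum + 1
    if c = 1 then
      (res.1, PQ.2.take (r - 1) ++ [[j]] ++ PQ.2.drop (r - 1))
    else
      (res.1, PQ.2.set (r - 1) ((PQ.2.getD (r - 1) []) ++ [j]))) ([], [])

/-! ### Procedure 5.2: generating DIRTs -/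

/-- `PlaceSeq rows v lc cnt out`: starting from `rows`, place the `cnt` entries
`v, v+1, …, v+cnt-1` one at a time, each at the end of some row strictly to the right of the
previously placed entry (whose column was `lc`), never placing at the end of a row of length
`j` when some lower row has length `j + 1`; `out` is the result. -/
inductive PlaceSeq : List (List ℕ) → ℕ → ℕ → ℕ → List (List ℕ) → Prop
  | refl (rows : List (List ℕ)) (v lc : ℕ) : PlaceSeq rows v lc 0 rows
  | step (rows : List (List ℕ)) (v lc cnt : ℕ) (r : ℕ) (out : List (List ℕ))
      (hr : r < rows.length)
      (hright : lc < (rows.getD r []).length + 1)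
      (hrule3 : ∀ r' < r, (rows.getD r' []).length ≠ (rows.getD r []).length + 1)
      (next : PlaceSeq (rows.set r ((rows.getD r []) ++ [v])) (v + 1)
        ((rows.getD r []).length + 1) cnt out) :
      PlaceSeq rows v lc (cnt + 1) out

/-!
Every descent of `S` is a partial sum of `β`, so each block
`(β₁ + ⋯ + β_{v-1}, β₁ + ⋯ + β_v]` of consecutive entries of `S` is a run without descents. Along
such a run the marked entries come first and climb strictly, and the unmarked ones follow and
descend weakly. Hence replacing each entry by the index of its block, keeping marks, gives an MPCT
of weight `β` whose standardisation order is the order of the entries of `S`. Conversely, if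
`Std(T) = S` and `wt(T) = β`, the boxes of `T` with entries `≤ v` are exactly the boxes holding
the `β₁ + ⋯ + β_v` smallest entries of `S`, so `T` is this destandardisation.
-/

lemma mem_diagramFinset {α : List ℕ} {b : Box} : b ∈ diagramFinset α ↔ inDiagram α b := by
  have getD_le_foldr_max : ∀ (l : List ℕ) (i : ℕ), l.getD i 0 ≤ l.foldr max 0 := by
    intro l
    induction l with
    | nil => simp
    | cons a t ih =>
      rintro (_ | i)
      · exact le_max_left _ _
      · exact (ih i).trans (le_max_right _ _)
  simp only [diagramFinset, Finset.mem_filter, Finset.mem_product, Finset.mem_Icc]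
  exact ⟨And.right, fun h => ⟨⟨⟨h.1, h.2.2.2.trans (getD_le_foldr_max _ _)⟩, h.2.1, h.2.2.1⟩, h⟩⟩

/-! ### Partial sums and blocks of a composition -/

def partialSum (β : List ℕ) (v : ℕ) : ℕ := (β.take v).sum

/-- The index `v` of the block `(partialSum β (v-1), partialSum β v]` containing `i`. -/
def blockIndex (β : List ℕ) (i : ℕ) : ℕ :=
  ((Finset.range β.length).filter (fun j => partialSum β (j + 1) < i)).card + 1

section Blocks

variable {β : List ℕ}

@[simp] lemma partialSum_zero : partialSum β 0 = 0 := by simp [partialSum]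

lemma partialSum_succ (v : ℕ) : partialSum β (v + 1) = partialSum β v + β.getD v 0 := by
  rcases lt_or_ge v β.length with h | h
  · rw [partialSum, partialSum, List.sum_take_succ _ _ h, List.getD_eq_getElem _ _ h]
  · simp [partialSum, List.take_of_length_le h, List.take_of_length_le (Nat.le_succ_of_le h),
      List.getElem?_eq_none h]

lemma partialSum_mono : Monotone (partialSum β) :=
  monotone_nat_of_le_succ fun v => by rw [partialSum_succ]; omega

lemma partialSum_length : partialSum β β.length = β.sum := by simp [partialSum]

lemma partialSum_le_sum (v : ℕ) : partialSum β v ≤ β.sum := by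
  rw [← partialSum_length]
  rcases le_total v β.length with h | h
  · exact partialSum_mono h
  · simp [partialSum, List.take_of_length_le h]

lemma sum_range_getD (v : ℕ) : ∑ r ∈ Finset.range v, β.getD r 0 = partialSum β v := by
  induction v with
  | zero => simp
  | succ v ih => rw [Finset.sum_range_succ, ih, partialSum_succ]

lemma blockIndex_pos (i : ℕ) : 1 ≤ blockIndex β i := by simp [blockIndex]

lemma blockIndex_mono : Monotone (blockIndex β) := fun i i' h => by
  unfold blockIndex
  gcongr with j _

lemma blockIndex_le_iff {i : ℕ} (hi : 1 ≤ i) (hin : i ≤ β.sum) (v : ℕ) :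
    blockIndex β i ≤ v ↔ i ≤ partialSum β v := by
  constructor
  · intro h
    by_contra! hlt
    have hv : v < β.length := by
      by_contra! hv
      simp only [partialSum, List.take_of_length_le hv] at hlt
      omega
    have : Finset.range v ⊆ (Finset.range β.length).filter (fun j => partialSum β (j + 1) < i) :=
      fun j hj => by
        simp only [Finset.mem_range, Finset.mem_filter] at hj ⊢
        exact ⟨by omega, (partialSum_mono (by omega)).trans_lt hlt⟩
    have := Finset.card_le_card this
    simp only [blockIndex, Finset.card_range] at h this
    omega
  · intro h
    have hv : v ≠ 0 := by rintro rfl; simp at h; omega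
    have : (Finset.range β.length).filter (fun j => partialSum β (j + 1) < i)
        ⊆ Finset.range (v - 1) :=
      fun j hj => by
        simp only [Finset.mem_range, Finset.mem_filter] at hj ⊢
        by_contra! hc
        have := partialSum_mono (β := β) (show v ≤ j + 1 by omega)
        omega
    have := Finset.card_le_card this
    simp only [blockIndex, Finset.card_range] at this ⊢
    omega

lemma blockIndex_eq_succ_iff {i : ℕ} (hi : 1 ≤ i) (hin : i ≤ β.sum) (v : ℕ) :
    blockIndex β i = v + 1 ↔ partialSum β v < i ∧ i ≤ partialSum β (v + 1) := by
  have h := blockIndex_le_iff hi hin v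
  have h' := blockIndex_le_iff hi hin (v + 1)
  omega

lemma blockIndex_lt_of_mem_setOfComp {i : ℕ} (h : i ∈ setOfComp β) :
    blockIndex β i < blockIndex β (i + 1) := by
  obtain ⟨k, hk, rfl⟩ : ∃ k, k < β.length - 1 ∧ partialSum β (k + 1) = i := by
    simpa [setOfComp, partialSum] using h
  unfold blockIndex
  gcongr
  refine (Finset.ssubset_iff_of_subset (Finset.monotone_filter_right _ fun j _ => by omega)).mpr
    ⟨k, ?_, ?_⟩
  · simp only [Finset.mem_filter, Finset.mem_range]
    omega
  · simp

lemma card_filter_blockIndex_eq (v : ℕ) :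
    ((Finset.Icc 1 β.sum).filter (fun i => blockIndex β i = v + 1)).card = β.getD v 0 := by
  have : (Finset.Icc 1 β.sum).filter (fun i => blockIndex β i = v + 1)
      = Finset.Icc (partialSum β v + 1) (partialSum β (v + 1)) := by
    ext i
    simp only [Finset.mem_filter, Finset.mem_Icc]
    have := partialSum_le_sum (β := β) (v + 1)
    constructor
    · rintro ⟨hi, h⟩
      have := (blockIndex_eq_succ_iff hi.1 hi.2 v).mp h
      omega
    · intro hi
      exact ⟨⟨by omega, by omega⟩,
        (blockIndex_eq_succ_iff (by omega) (by omega) v).mpr (by omega)⟩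
  rw [this, Nat.card_Icc, partialSum_succ]
  omega

lemma not_mem_of_blockIndex_eq {X : Finset ℕ} (hX : X ⊆ setOfComp β) {i j k : ℕ}
    (hik : i ≤ k) (hkj : k < j) (h : blockIndex β i = blockIndex β j) : k ∉ X := fun hk => by
  have := blockIndex_lt_of_mem_setOfComp (hX hk)
  have := blockIndex_mono (β := β) hik
  have := blockIndex_mono (β := β) (show k + 1 ≤ j by omega)
  omega

end Blocks

/-! ### Compositions and their sets of partial sums -/

lemma sum_map_range_sub_add {g : ℕ → ℕ} {m : ℕ} (hg : ∀ i < m, g i ≤ g (i + 1)) :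
    ((List.range m).map (fun i => g (i + 1) - g i)).sum + g 0 = g m := by
  induction m with
  | zero => simp
  | succ m ih =>
    rw [List.sum_range_succ, add_right_comm, ih fun i hi => hg i (by omega)]
    have := hg m (by omega)
    omega

lemma mem_setOfComp_compOf {n : ℕ} {X : Finset ℕ} (hX : ∀ x ∈ X, x ≤ n) {x : ℕ}
    (hx : x ∈ X) :
    x ∈ setOfComp (compOf n X) := by
  set s := X.sort (· ≤ ·) with hs
  set l := (0 :: s) ++ [n] with hl
  have hsorted : l.Pairwise (· ≤ ·) := by
    refine List.pairwise_append.mpr ⟨List.pairwise_cons.mpr ⟨fun _ _ => Nat.zero_le _,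
      X.pairwise_sort _⟩, List.pairwise_singleton _ _, fun a ha b hb => ?_⟩
    rw [List.mem_singleton.mp hb]
    rcases List.mem_cons.mp ha with rfl | ha
    · exact Nat.zero_le _
    · exact hX a ((Finset.mem_sort _).mp ha)
  have hmono : ∀ i < l.length - 1, l.getD i 0 ≤ l.getD (i + 1) 0 := fun i hi => by
    rw [List.getD_eq_getElem _ _ (by omega), List.getD_eq_getElem _ _ (by omega)]
    exact List.pairwise_iff_getElem.mp hsorted i (i + 1) _ _ (Nat.lt_succ_self i)
  obtain ⟨k, hk, rfl⟩ := List.getElem_of_mem (show x ∈ s from (Finset.mem_sort _).mpr hx)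
  have hlen : l.length = s.length + 2 := by simp [hl]
  simp only [setOfComp, compOf, List.mem_toFinset, List.mem_map, List.mem_range]
  refine ⟨k, by simp [← hs, ← hl, hlen, hk], ?_⟩
  have htel := sum_map_range_sub_add (g := fun i => l.getD i 0) (m := k + 1)
    fun i hi => hmono i (by omega)
  rw [show l.getD 0 0 = 0 from rfl, add_zero] at htel
  rw [← hs, ← hl, ← List.map_take, List.take_range, min_eq_left (by omega), htel]
  simp [hl, List.getD_eq_getElem?_getD, hk, List.getElem?_append_left hk]

lemma setOfComp_subset_of_refines {β γ : List ℕ} (h : Refines β γ) :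
    setOfComp γ ⊆ setOfComp β := by
  obtain ⟨L, hne, rfl, rfl⟩ := h
  intro i hi
  simp only [setOfComp, List.mem_toFinset, List.mem_map, List.mem_range, List.length_map]
    at hi ⊢
  obtain ⟨k, hk, rfl⟩ := hi
  have hlen : ∀ M ⊆ L, M.length ≤ M.flatten.length := fun M hM => by
    simpa [List.length_flatten] using List.length_le_sum_of_one_le (M.map List.length)
      (by simpa [Nat.one_le_iff_ne_zero] using fun l hl => hne l (hM hl))
  set m := (L.take (k + 1)).flatten.length
  have hm1 : k + 1 ≤ m := by
    have := hlen _ (List.take_subset (k + 1) L)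
    rwa [List.length_take, min_eq_left (by omega)] at this
  have hm2 : 1 ≤ (L.drop (k + 1)).flatten.length :=
    (by simp; omega : 1 ≤ (L.drop (k + 1)).length).trans (hlen _ (List.drop_subset _ _))
  have hsplit : L.flatten = (L.take (k + 1)).flatten ++ (L.drop (k + 1)).flatten := by
    rw [← List.flatten_append, List.take_append_drop]
  refine ⟨m - 1, ?_, ?_⟩
  · rw [hsplit, List.length_append]; omega
  · rw [Nat.sub_add_cancel (by omega), hsplit, List.take_left, List.sum_flatten, List.map_take]

/-! ### Weights -/

lemma card_diagramFinset (α : List ℕ) : (diagramFinset α).card = α.sum := by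
  rw [Finset.card_eq_sum_card_fiberwise (f := fun b : Box => b.2 - 1)
    (t := Finset.range α.length) fun b hb => by
      have := mem_diagramFinset.mp hb; simp only [inDiagram] at this; simp; omega,
    ← partialSum_length, ← sum_range_getD]
  refine Finset.sum_congr rfl fun r hr => ?_
  have : (diagramFinset α).filter (fun b => b.2 - 1 = r)
      = Finset.Icc 1 (α.getD r 0) ×ˢ {r + 1} := by
    ext ⟨c, r'⟩
    simp only [Finset.mem_filter, mem_diagramFinset, inDiagram, Finset.mem_product,
      Finset.mem_Icc, Finset.mem_singleton]
    simp only [Finset.mem_range] at hr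
    constructor
    · rintro ⟨⟨h1, h2, h3, h4⟩, rfl⟩
      exact ⟨⟨h1, h4⟩, by omega⟩
    · rintro ⟨⟨h1, h4⟩, rfl⟩
      exact ⟨⟨h1, by omega, by omega, h4⟩, rfl⟩
  rw [this, Finset.card_product, Nat.card_Icc, Finset.card_singleton]
  omega

section Weight

variable {α β : List ℕ} {T : Box → MEntry}

lemma wtList_eq_iff (hβ : ∀ a ∈ β, 0 < a) :
    wtList α T = β ↔ ∀ v, wtFun α T (v + 1) = β.getD v 0 := by
  set M := (diagramFinset α).sup (fun b => (T b).1) with hM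
  have hzero : ∀ v, M < v → wtFun α T v = 0 := fun v hv =>
    Finset.card_eq_zero.mpr <| Finset.filter_eq_empty_iff.mpr fun b hb hbv => by
      have := Finset.le_sup (f := fun b => (T b).1) hb
      omega
  have htop : 0 < M → 0 < wtFun α T M := fun hM0 => by
    rcases (diagramFinset α).eq_empty_or_nonempty with hD | hD
    · simp [hM, hD] at hM0
    obtain ⟨b, hb, hbM⟩ := Finset.exists_mem_eq_sup _ hD (fun b => (T b).1)
    exact Finset.card_pos.mpr ⟨b, Finset.mem_filter.mpr ⟨hb, hbM.symm⟩⟩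
  constructor
  · intro h v
    have hlen : M = β.length := by simpa [wtList] using congrArg List.length h
    rcases lt_or_ge v β.length with hv | hv
    · rw [List.getD_eq_getElem _ _ hv]
      simp [← h, wtList]
    · rw [List.getD_eq_default _ _ hv, hzero _ (by omega)]
  · intro h
    have hlen : M = β.length := by
      rcases lt_trichotomy M β.length with hlt | heq | hgt
      · have hlast := hβ _ (List.getElem_mem (show β.length - 1 < β.length by omega))
        have := h (β.length - 1)
        rw [Nat.sub_add_cancel (by omega), hzero _ hlt, List.getD_eq_getElem _ _ (by omega)]
          at this
        omega
      · exact heq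
      · have := h (M - 1)
        rw [Nat.sub_add_cancel (by omega), List.getD_eq_default _ _ (by omega)] at this
        have := htop (by omega)
        omega
    refine List.ext_getElem (by simp [wtList, ← hM, hlen]) fun i _ hi => ?_
    simp [wtList, h i, List.getElem?_eq_getElem hi]

lemma card_filter_fst_le (hpos : ∀ b, inDiagram α b → 1 ≤ (T b).1)
    (hw : ∀ v, wtFun α T (v + 1) = β.getD v 0) (v : ℕ) :
    ((diagramFinset α).filter (fun b => (T b).1 ≤ v)).card = partialSum β v := by
  induction v with
  | zero =>
    rw [partialSum_zero, Finset.card_eq_zero, Finset.filter_eq_empty_iff]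
    exact fun b hb h => by have := hpos b (mem_diagramFinset.mp hb); omega
  | succ v ih =>
    rw [partialSum_succ, ← ih, ← hw, wtFun, ← Finset.card_union_of_disjoint
      (Finset.disjoint_filter.mpr fun _ _ h h' => by omega), ← Finset.filter_or]
    congr 1
    ext b
    simp only [Finset.mem_filter, and_congr_right_iff]
    intro _
    omega

lemma inMPCT_of_wtFun_eq {n : ℕ} (hT : IsMPCT n α T) (hβ : ∀ a ∈ β, 0 < a)
    (hw : ∀ v, wtFun α T (v + 1) = β.getD v 0) : InMPCT n α T := by
  refine ⟨hT, fun i j hi hij hzero => ?_⟩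
  have hlen : β.length ≤ i - 1 := by
    by_contra! h
    have := hβ _ (List.getElem_mem h)
    rw [← Nat.sub_add_cancel hi, hw, List.getD_eq_getElem _ _ h] at hzero
    omega
  rw [← Nat.sub_add_cancel (show 1 ≤ j by omega), hw, List.getD_eq_default _ _ (by omega)]

end Weight

/-! ### Standardisation and destandardisation -/

def destandardize (α β : List ℕ) (S : Box → MEntry) : Box → MEntry := fun b =>
  if inDiagram α b then (blockIndex β (S b).1, (S b).2) else (0, false)

lemma fst_le_of_mcode_le {x y : MEntry} (h : mcode x ≤ mcode y) : x.1 ≤ y.1 := by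
  unfold mcode at h; split_ifs at h <;> omega

lemma mcode_lt_of_fst_lt {x y : MEntry} (h : x.1 < y.1) : mcode x < mcode y := by
  unfold mcode; split_ifs <;> omega

section Standardize

variable {α β : List ℕ} {T : Box → MEntry}

lemma keyLt_asymm {a b : Box} (h : keyLt α T a b) : ¬ keyLt α T b a := by
  unfold keyLt at *; omega

lemma keyLt_irrefl (a : Box) : ¬ keyLt α T a a := fun h => keyLt_asymm h h

lemma stdize_fst_bounds {b : Box} (hb : inDiagram α b) :
    ((diagramFinset α).filter (fun a => (T a).1 < (T b).1)).card < (stdize α T b).1 ∧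
      (stdize α T b).1 ≤ ((diagramFinset α).filter (fun a => (T a).1 ≤ (T b).1)).card := by
  simp only [stdize, if_pos hb]
  constructor
  · refine Nat.lt_succ_of_le (Finset.card_le_card (Finset.monotone_filter_right _ ?_))
    exact fun a _ h => Or.inl (mcode_lt_of_fst_lt h)
  · have hsub : (diagramFinset α).filter (fun a => keyLt α T a b)
        ⊆ ((diagramFinset α).filter (fun a => (T a).1 ≤ (T b).1)).erase b := fun a ha => by
      simp only [Finset.mem_filter, Finset.mem_erase] at ha ⊢
      refine ⟨fun hab => keyLt_irrefl b (hab ▸ ha.2), ha.1, fst_le_of_mcode_le ?_⟩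
      have := ha.2
      unfold keyLt at this
      omega
    have hmem : b ∈ (diagramFinset α).filter (fun a => (T a).1 ≤ (T b).1) :=
      Finset.mem_filter.mpr ⟨mem_diagramFinset.mpr hb, le_rfl⟩
    have := Finset.card_le_card hsub
    rw [Finset.card_erase_of_mem hmem] at this
    have := Finset.card_pos.mpr ⟨b, hmem⟩
    omega

lemma destandardize_stdize (hoff : ∀ b, ¬ inDiagram α b → T b = (0, false))
    (hpos : ∀ b, inDiagram α b → 1 ≤ (T b).1) (hw : ∀ v, wtFun α T (v + 1) = β.getD v 0) :
    destandardize α β (stdize α T) = T := by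
  funext b
  by_cases hb : inDiagram α b
  · obtain ⟨v, hv⟩ : ∃ v, (T b).1 = v + 1 := ⟨(T b).1 - 1, by have := hpos b hb; omega⟩
    obtain ⟨hlo, hhi⟩ := stdize_fst_bounds (T := T) hb
    simp only [hv, Nat.lt_succ_iff, card_filter_fst_le hpos hw] at hlo hhi
    have hsum := partialSum_le_sum (β := β) (v + 1)
    have hblk := (blockIndex_eq_succ_iff (by omega) (by omega) v).mpr ⟨hlo, hhi⟩
    simp only [destandardize, if_pos hb, hblk, ← hv]
    simp [stdize, hb]
  · simp [destandardize, hb, hoff b hb]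

end Standardize

/-! ### Standard marked peak composition tableaux -/

lemma IsMPCT.two_mem_of_row_lt {n : ℕ} {α : List ℕ} {T : Box → MEntry} (hT : IsMPCT n α T)
    {r : ℕ} {b : Box} (hr : 1 ≤ r) (hb : inDiagram α b) (hbn : (T b).1 ≤ n) (hrb : r < b.2) :
    inDiagram α (2, r) ∧ (T (2, r)).1 ≤ (T b).1 := by
  obtain ⟨γ, hγ, hE⟩ := hT.peak_filter _ hbn
  have hbγ : b ∈ {b | inDiagram γ b} := hE ▸ ⟨hb, le_rfl⟩
  have h2γ : (2, r) ∈ {b | inDiagram γ b} :=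
    ⟨one_le_two, hr, by have := hbγ.2.2.1; omega, hγ.2 (r - 1) (by have := hbγ.2.2.1; omega)⟩
  rw [← hE] at h2γ
  exact h2γ

namespace InSMPCT

variable {n : ℕ} {α : List ℕ} {S : Box → MEntry}

lemma fst_mem_Icc (hS : InSMPCT n α S) (hα : α.sum = n) {b : Box} (hb : inDiagram α b) :
    (S b).1 ∈ Finset.Icc 1 n := by
  have hcard : ((diagramFinset α).filter (fun b => (S b).1 ∈ Finset.Icc 1 n)).card
      = (diagramFinset α).card := by
    rw [card_diagramFinset, hα, Finset.card_eq_sum_card_fiberwise (f := fun b => (S b).1)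
      (s := (diagramFinset α).filter (fun b => (S b).1 ∈ Finset.Icc 1 n)) (t := Finset.Icc 1 n)
      fun b hb => (Finset.mem_filter.mp hb).2]
    conv_rhs => rw [← Nat.add_sub_cancel n 1, ← Nat.card_Icc 1 n, Finset.card_eq_sum_ones]
    refine Finset.sum_congr rfl fun i hi => ?_
    rw [Finset.filter_filter, Finset.filter_congr fun a _ => ⟨And.right, fun h => ⟨h ▸ hi, h⟩⟩]
    exact hS.2 i (Finset.mem_Icc.mp hi).1 (Finset.mem_Icc.mp hi).2
  exact Finset.filter_card_eq hcard b (mem_diagramFinset.mpr hb)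

lemma injOn (hS : InSMPCT n α S) (hα : α.sum = n) {a b : Box} (ha : inDiagram α a)
    (hb : inDiagram α b) (h : (S a).1 = (S b).1) : a = b := by
  obtain ⟨h1, hn⟩ := Finset.mem_Icc.mp (hS.fst_mem_Icc hα ha)
  exact Finset.card_le_one.mp (hS.2 _ h1 hn).le a
    (Finset.mem_filter.mpr ⟨mem_diagramFinset.mpr ha, rfl⟩) b
    (Finset.mem_filter.mpr ⟨mem_diagramFinset.mpr hb, h.symm⟩)

lemma exists_fst_eq (hS : InSMPCT n α S) {i : ℕ} (h1 : 1 ≤ i) (hn : i ≤ n) :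
    ∃ b, inDiagram α b ∧ (S b).1 = i := by
  obtain ⟨b, hb⟩ := Finset.card_pos.mp (hS.2 i h1 hn ▸ Nat.one_pos)
  exact ⟨b, mem_diagramFinset.mp (Finset.mem_filter.mp hb).1, (Finset.mem_filter.mp hb).2⟩

lemma card_filter_fst (hS : InSMPCT n α S) (hα : α.sum = n) (P : ℕ → Prop)
    [DecidablePred P] :
    ((diagramFinset α).filter (fun b => P (S b).1)).card = ((Finset.Icc 1 n).filter P).card := by
  have himage : (diagramFinset α).image (fun b => (S b).1) = Finset.Icc 1 n := by
    ext i
    simp only [Finset.mem_image, mem_diagramFinset]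
    refine ⟨fun ⟨b, hb, hbi⟩ => hbi ▸ hS.fst_mem_Icc hα hb, fun hi => ?_⟩
    exact hS.exists_fst_eq (Finset.mem_Icc.mp hi).1 (Finset.mem_Icc.mp hi).2
  rw [← himage, Finset.filter_image, Finset.card_image_of_injOn]
  exact fun a ha b hb h => hS.injOn hα (mem_diagramFinset.mp (Finset.mem_filter.mp ha).1)
    (mem_diagramFinset.mp (Finset.mem_filter.mp hb).1) h

lemma card_filter_fst_lt (hS : InSMPCT n α S) (hα : α.sum = n) {b : Box} (hb : inDiagram α b) :
    ((diagramFinset α).filter (fun a => (S a).1 < (S b).1)).card = (S b).1 - 1 := by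
  rw [hS.card_filter_fst hα (· < (S b).1)]
  have := Finset.mem_Icc.mp (hS.fst_mem_Icc hα hb)
  rw [show (Finset.Icc 1 n).filter (· < (S b).1) = Finset.Icc 1 ((S b).1 - 1) by
    ext i; simp only [Finset.mem_filter, Finset.mem_Icc]; omega, Nat.card_Icc]
  omega

lemma fst_lt_of_mcode_le (hS : InSMPCT n α S) (hα : α.sum = n) {a b : Box}
    (ha : inDiagram α a) (hb : inDiagram α b) (hab : a ≠ b) (h : mcode (S a) ≤ mcode (S b)) :
    (S a).1 < (S b).1 :=
  (fst_le_of_mcode_le h).lt_of_ne fun he => hab (hS.injOn hα ha hb he)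

lemma fst_lt_of_col_lt (hS : InSMPCT n α S) (hα : α.sum = n) {c c' r : ℕ} (hcc : c < c')
    (h : inDiagram α (c, r)) (h' : inDiagram α (c', r)) : (S (c, r)).1 < (S (c', r)).1 :=
  hS.fst_lt_of_mcode_le hα h h' (by simp; omega) (hS.1.1.row_weak c c' r hcc h h').1

lemma fst_two_lt_fst_one_succ (hS : InSMPCT n α S) (hα : α.sum = n) {r : ℕ}
    (h2 : inDiagram α (2, r)) (h1 : inDiagram α (1, r + 1)) : (S (2, r)).1 < (S (1, r + 1)).1 :=
  (hS.1.1.two_mem_of_row_lt h2.2.1 h1 (Finset.mem_Icc.mp (hS.fst_mem_Icc hα h1)).2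
    (by simp)).2.lt_of_ne fun he => by simpa using hS.injOn hα h2 h1 he

lemma row_le_of_fst_eq_succ (hS : InSMPCT n α S) (hα : α.sum = n) {r : ℕ} {b : Box}
    (h1 : inDiagram α (1, r)) (hb : inDiagram α b) (hval : (S b).1 = (S (1, r)).1 + 1) :
    b.2 ≤ r := by
  by_contra! hrb
  obtain ⟨h2, hle⟩ : inDiagram α (2, r) ∧ (S (2, r)).1 ≤ (S b).1 :=
    hS.1.1.two_mem_of_row_lt h1.2.1 hb (Finset.mem_Icc.mp (hS.fst_mem_Icc hα hb)).2 hrb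
  have := hS.fst_lt_of_col_lt hα one_lt_two h1 h2
  obtain rfl := hS.injOn hα h2 hb (by omega)
  exact lt_irrefl _ hrb

end InSMPCT

section Runs

variable {n : ℕ} {α : List ℕ} {S : Box → MEntry}

lemma row_lt_of_not_mem_DesM {i : ℕ} (hi : i ∉ DesM n α S) (h1 : 1 ≤ i) (hn : i + 1 ≤ n)
    {a b : Box} (ha : inDiagram α a) (hb : inDiagram α b) (hva : (S a).1 = i)
    (hvb : (S b).1 = i + 1) (hm : (S b).2 = true) : a.2 < b.2 := by
  by_contra! h
  exact hi (Finset.mem_filter.mpr ⟨Finset.mem_Icc.mpr ⟨h1, by omega⟩, a,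
    mem_diagramFinset.mpr ha, b, mem_diagramFinset.mpr hb, hva, hvb, Or.inr ⟨hm, h⟩⟩)

lemma row_le_of_not_mem_DesM {i : ℕ} (hi : i ∉ DesM n α S) (h1 : 1 ≤ i) (hn : i + 1 ≤ n)
    {a b : Box} (ha : inDiagram α a) (hb : inDiagram α b) (hva : (S a).1 = i)
    (hvb : (S b).1 = i + 1) (hm : (S a).2 = false) : b.2 ≤ a.2 := by
  by_contra! h
  exact hi (Finset.mem_filter.mpr ⟨Finset.mem_Icc.mpr ⟨h1, by omega⟩, a,
    mem_diagramFinset.mpr ha, b, mem_diagramFinset.mpr hb, hva, hvb, Or.inl ⟨hm, h⟩⟩)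

lemma InSMPCT.marked_of_run (hS : InSMPCT n α S) (hα : α.sum = n) {i d : ℕ}
    (hrun : ∀ k, i ≤ k → k < i + d → k ∉ DesM n α S) (h1 : 1 ≤ i) (hn : i + d ≤ n)
    {a b : Box} (ha : inDiagram α a) (hb : inDiagram α b) (hva : (S a).1 = i)
    (hvb : (S b).1 = i + d) (hm : (S b).2 = true) : (S a).2 = true ∧ a.2 + d ≤ b.2 := by
  induction d generalizing b with
  | zero => obtain rfl := hS.injOn hα ha hb (by omega); exact ⟨hm, le_rfl⟩
  | succ d ih =>
    obtain ⟨c, hc, hvc⟩ := hS.exists_fst_eq (i := i + d) (by omega) (by omega)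
    have hnd := hrun (i + d) (by omega) (by omega)
    have hcb := row_lt_of_not_mem_DesM hnd (by omega) (by omega) hc hb hvc hvb hm
    have hmc : (S c).2 = true := by
      by_contra hmc
      have := row_le_of_not_mem_DesM hnd (by omega) (by omega) hc hb hvc hvb (by simpa using hmc)
      omega
    obtain ⟨hma, hac⟩ := ih (fun k hk hk' => hrun k hk (by omega)) (by omega) hc hvc hmc
    exact ⟨hma, by omega⟩

lemma InSMPCT.unmarked_of_run (hS : InSMPCT n α S) (hα : α.sum = n) {i d : ℕ}
    (hrun : ∀ k, i ≤ k → k < i + d → k ∉ DesM n α S) (h1 : 1 ≤ i) (hn : i + d ≤ n)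
    {a b : Box} (ha : inDiagram α a) (hb : inDiagram α b) (hva : (S a).1 = i)
    (hvb : (S b).1 = i + d) (hm : (S a).2 = false) : (S b).2 = false ∧ b.2 ≤ a.2 := by
  induction d generalizing b with
  | zero => obtain rfl := hS.injOn hα ha hb (by omega); exact ⟨hm, le_rfl⟩
  | succ d ih =>
    obtain ⟨c, hc, hvc⟩ := hS.exists_fst_eq (i := i + d) (by omega) (by omega)
    have hnd := hrun (i + d) (by omega) (by omega)
    obtain ⟨hmc, hca⟩ := ih (fun k hk hk' => hrun k hk (by omega)) (by omega) hc hvc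
    have hbc := row_le_of_not_mem_DesM hnd (by omega) (by omega) hc hb hvc hvb hmc
    refine ⟨?_, hbc.trans hca⟩
    by_contra hmb
    have := row_lt_of_not_mem_DesM hnd (by omega) (by omega) hc hb hvc hvb (by simpa using hmb)
    omega

end Runs

/-! ### Destandardising along the blocks of a refinement -/

section Destandardize

variable {n : ℕ} {α β : List ℕ} {S : Box → MEntry}

lemma InSMPCT.marked_of_blockIndex_eq (hS : InSMPCT n α S) (hα : α.sum = n)
    (hdes : DesM n α S ⊆ setOfComp β) {a b : Box} (ha : inDiagram α a) (hb : inDiagram α b)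
    (hle : (S a).1 ≤ (S b).1) (hblk : blockIndex β (S a).1 = blockIndex β (S b).1)
    (hm : (S b).2 = true) : (S a).2 = true ∧ a.2 + ((S b).1 - (S a).1) ≤ b.2 :=
  hS.marked_of_run hα (d := (S b).1 - (S a).1)
    (fun _ hk hk' => not_mem_of_blockIndex_eq hdes hk (by omega) hblk)
    (Finset.mem_Icc.mp (hS.fst_mem_Icc hα ha)).1
    (by have := Finset.mem_Icc.mp (hS.fst_mem_Icc hα hb); omega) ha hb rfl (by omega) hm

lemma InSMPCT.unmarked_of_blockIndex_eq (hS : InSMPCT n α S) (hα : α.sum = n)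
    (hdes : DesM n α S ⊆ setOfComp β) {a b : Box} (ha : inDiagram α a) (hb : inDiagram α b)
    (hle : (S a).1 ≤ (S b).1) (hblk : blockIndex β (S a).1 = blockIndex β (S b).1)
    (hm : (S a).2 = false) : (S b).2 = false ∧ b.2 ≤ a.2 :=
  hS.unmarked_of_run hα (d := (S b).1 - (S a).1)
    (fun _ hk hk' => not_mem_of_blockIndex_eq hdes hk (by omega) hblk)
    (Finset.mem_Icc.mp (hS.fst_mem_Icc hα ha)).1
    (by have := Finset.mem_Icc.mp (hS.fst_mem_Icc hα hb); omega) ha hb rfl (by omega) hm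

lemma destandardize_of_inDiagram {b : Box} (hb : inDiagram α b) :
    destandardize α β S b = (blockIndex β (S b).1, (S b).2) := if_pos hb

lemma keyLt_destandardize (hS : InSMPCT n α S) (hα : α.sum = n)
    (hdes : DesM n α S ⊆ setOfComp β) {a b : Box} (ha : inDiagram α a) (hb : inDiagram α b)
    (hlt : (S a).1 < (S b).1) : keyLt α (destandardize α β S) a b := by
  rcases (blockIndex_mono (β := β) hlt.le).lt_or_eq with hblk | hblk
  · exact Or.inl (mcode_lt_of_fst_lt (by simpa [destandardize_of_inDiagram, ha, hb]))
  have hpos := blockIndex_pos (β := β) (S b).1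
  have harow := ha.2.2.1
  unfold keyLt stdk2
  rw [destandardize_of_inDiagram ha, destandardize_of_inDiagram hb, hblk]
  cases hmb : (S b).2 <;> cases hma : (S a).2 <;>
    simp only [mcode, ite_true, ite_false, Bool.false_eq_true, lt_self_iff_false, true_and,
      false_or]
  · rcases (hS.unmarked_of_blockIndex_eq hα hdes ha hb hlt.le hblk hma).2.lt_or_eq with hba | hba
    · omega
    refine Or.inr ⟨by rw [hba], ?_⟩
    obtain ⟨c, r⟩ := a
    obtain ⟨c', r'⟩ := b
    dsimp only at hba ⊢
    subst hba
    by_contra! hcol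
    rcases hcol.lt_or_eq with hcol | rfl
    · have := hS.fst_lt_of_col_lt hα hcol hb ha
      omega
    · exact lt_irrefl _ hlt
  · omega
  · simp [(hS.marked_of_blockIndex_eq hα hdes ha hb hlt.le hblk hmb).1] at hma
  · have := (hS.marked_of_blockIndex_eq hα hdes ha hb hlt.le hblk hmb).2
    omega

lemma stdize_destandardize (hS : InSMPCT n α S) (hα : α.sum = n)
    (hdes : DesM n α S ⊆ setOfComp β) : stdize α (destandardize α β S) = S := by
  funext b
  by_cases hb : inDiagram α b
  · have hrank : (diagramFinset α).filter (fun a => keyLt α (destandardize α β S) a b)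
        = (diagramFinset α).filter (fun a => (S a).1 < (S b).1) := by
      refine Finset.filter_congr fun a haD => ?_
      have ha := mem_diagramFinset.mp haD
      refine ⟨fun h => ?_, keyLt_destandardize hS hα hdes ha hb⟩
      by_contra! hle
      rcases hle.lt_or_eq with hlt | heq
      · exact keyLt_asymm h (keyLt_destandardize hS hα hdes hb ha hlt)
      · exact keyLt_irrefl b (hS.injOn hα ha hb heq.symm ▸ h)
    have := (Finset.mem_Icc.mp (hS.fst_mem_Icc hα hb)).1
    rw [stdize, if_pos hb, hrank, hS.card_filter_fst_lt hα hb, destandardize_of_inDiagram hb,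
      Nat.sub_add_cancel this]
  · simp [stdize, hb, hS.1.1.offDiag b hb]

lemma destandardize_row_weak (hS : InSMPCT n α S) (hα : α.sum = n)
    (hdes : DesM n α S ⊆ setOfComp β) {c c' r : ℕ} (hcc : c < c') (h : inDiagram α (c, r))
    (h' : inDiagram α (c', r)) :
    mcode (destandardize α β S (c, r)) ≤ mcode (destandardize α β S (c', r)) ∧
      ((destandardize α β S (c, r)).2 = true →
        destandardize α β S (c, r) ≠ destandardize α β S (c', r)) := by
  have hlt := hS.fst_lt_of_col_lt hα hcc h h'
  rw [destandardize_of_inDiagram h, destandardize_of_inDiagram h']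
  rcases (blockIndex_mono (β := β) hlt.le).lt_or_eq with hblk | hblk
  · have := mcode_lt_of_fst_lt (x := (blockIndex β (S (c, r)).1, (S (c, r)).2))
      (y := (blockIndex β (S (c', r)).1, (S (c', r)).2)) hblk
    exact ⟨this.le, fun _ he => (he ▸ this).false⟩
  have hm : (S (c', r)).2 = false := by
    by_contra hm
    have := (hS.marked_of_blockIndex_eq hα hdes h h' hlt.le hblk (by simpa using hm)).2
    dsimp only at this
    omega
  rw [hblk, hm]
  refine ⟨by simp [mcode], fun hm' he => ?_⟩
  simp only at hm'
  simp [hm'] at he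

lemma destandardize_col_strict (hS : InSMPCT n α S) (hα : α.sum = n)
    (hdes : DesM n α S ⊆ setOfComp β) {r r' : ℕ} (hrr : r < r') (h : inDiagram α (1, r))
    (h' : inDiagram α (1, r')) :
    mcode (destandardize α β S (1, r)) < mcode (destandardize α β S (1, r')) := by
  have hlt :=
    hS.fst_lt_of_mcode_le hα h h' (by simp; omega) (hS.1.1.col_strict r r' hrr h h').le
  rw [destandardize_of_inDiagram h, destandardize_of_inDiagram h']
  rcases (blockIndex_mono (β := β) hlt.le).lt_or_eq with hblk | hblk
  · exact mcode_lt_of_fst_lt hblk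
  have hm : (S (1, r)).2 = true := by
    by_contra hm
    have := (hS.unmarked_of_blockIndex_eq hα hdes h h' hlt.le hblk (by simpa using hm)).2
    dsimp only at this
    omega
  -- Otherwise the successor of `S (1, r)` would be marked, hence strictly above row `r`.
  have hm' : (S (1, r')).2 = false := by
    by_contra hm'
    obtain ⟨b, hb, hvb⟩ := hS.exists_fst_eq (i := (S (1, r)).1 + 1) (by omega)
      (by have := Finset.mem_Icc.mp (hS.fst_mem_Icc hα h'); omega)
    have hblk' : blockIndex β (S b).1 = blockIndex β (S (1, r')).1 := by
      have := blockIndex_mono (β := β) (show (S (1, r)).1 ≤ (S b).1 by omega)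
      have := blockIndex_mono (β := β) (show (S b).1 ≤ (S (1, r')).1 by omega)
      omega
    have hmb := (hS.marked_of_blockIndex_eq hα hdes hb h' (by omega) hblk'
      (by simpa using hm')).1
    have := (hS.marked_of_blockIndex_eq hα hdes h hb (by omega) (by omega) hmb).2
    have := hS.row_le_of_fst_eq_succ hα h hb hvb
    omega
  rw [hblk, hm, hm']
  have := blockIndex_pos (β := β) (S (1, r')).1
  unfold mcode
  simp only [ite_true, ite_false, Bool.false_eq_true]
  omega

lemma destandardize_peak_filter (hS : InSMPCT n α S) (hα : α.sum = n) (hβ : β.sum = n)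
    {k : ℕ} : IsPeakDiagram {b | inDiagram α b ∧ (destandardize α β S b).1 ≤ k} := by
  have : {b | inDiagram α b ∧ (destandardize α β S b).1 ≤ k}
      = {b | inDiagram α b ∧ (S b).1 ≤ partialSum β k} := Set.ext fun b =>
    and_congr_right fun hb => by
      have := Finset.mem_Icc.mp (hS.fst_mem_Icc hα hb)
      rw [destandardize_of_inDiagram hb]
      exact blockIndex_le_iff this.1 (by omega) k
  rw [this]
  exact hS.1.1.peak_filter _ (hβ ▸ partialSum_le_sum k)

lemma destandardize_mpct4 (hS : InSMPCT n α S) (hα : α.sum = n)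
    (hdes : DesM n α S ⊆ setOfComp β) {r : ℕ} (h2 : inDiagram α (2, r))
    (h1 : inDiagram α (1, r + 1)) (hm : (destandardize α β S (2, r)).2 = false) :
    (destandardize α β S (1, r + 1)).1 ≠ (destandardize α β S (2, r)).1 := by
  rw [destandardize_of_inDiagram h1, destandardize_of_inDiagram h2] at *
  intro hblk
  have := (hS.unmarked_of_blockIndex_eq hα hdes h2 h1 (hS.fst_two_lt_fst_one_succ hα h2 h1).le
    hblk.symm hm).2
  dsimp only at this
  omega

lemma isMPCT_destandardize (hS : InSMPCT n α S) (hα : α.sum = n) (hβ : β.sum = n)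
    (hdes : DesM n α S ⊆ setOfComp β) : IsMPCT n α (destandardize α β S) where
  offDiag _ hb := if_neg hb
  pos _ hb := (destandardize_of_inDiagram hb).symm ▸ blockIndex_pos _
  row_weak _ _ _ hcc h h' := destandardize_row_weak hS hα hdes hcc h h'
  col_strict _ _ hrr h h' := destandardize_col_strict hS hα hdes hrr h h'
  peak_filter _ _ := destandardize_peak_filter hS hα hβ
  mpct4 _ h2 h1 hm := destandardize_mpct4 hS hα hdes h2 h1 hm

lemma wtFun_destandardize (hS : InSMPCT n α S) (hα : α.sum = n) (hβ : β.sum = n) (v : ℕ) :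
    wtFun α (destandardize α β S) (v + 1) = β.getD v 0 := by
  rw [← card_filter_blockIndex_eq, hβ, ← hS.card_filter_fst hα, wtFun]
  exact congrArg _ (Finset.filter_congr fun b hb => by
    rw [destandardize_of_inDiagram (mem_diagramFinset.mp hb)])

end Destandardize

theorem stmt2 (n : ℕ) (α : List ℕ) (hα : IsPeakComposition n α)
    (S : Box → MEntry) (hS : InSMPCT n α S)
    (β : List ℕ) (hβ : IsComposition n β)
    (href : Refines β (compOf n (DesM n α S))) :
    ∃! T : Box → MEntry, InMPCT n α T ∧ wtList α T = β ∧ stdize α T = S := by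
  obtain ⟨⟨-, hα⟩, -⟩ := hα
  obtain ⟨hβpos, hβ⟩ := hβ
  have hdes : DesM n α S ⊆ setOfComp β := fun i hi =>
    setOfComp_subset_of_refines href <| mem_setOfComp_compOf
      (fun x hx => (Finset.mem_Icc.mp (Finset.mem_filter.mp hx).1).2.trans (Nat.sub_le n 1)) hi
  have hw := wtFun_destandardize hS hα hβ
  refine ⟨destandardize α β S,
    ⟨inMPCT_of_wtFun_eq (isMPCT_destandardize hS hα hβ hdes) hβpos hw,
      (wtList_eq_iff hβpos).mpr hw, stdize_destandardize hS hα hdes⟩, ?_⟩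
  rintro T ⟨⟨hT, -⟩, hwT, rfl⟩
  exact (destandardize_stdize hT.offDiag hT.pos ((wtList_eq_iff hβpos).mp hwT)).symm

end QSQ
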